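/- arXiv:1303.6684 — 2 statements merged into one kernel-verified Lean document; each statement's English description precedes it below -/
import Mathlib

section
/- For λ > 0, ν ∈ (0,1], δ > 0 and s > 0 with s^ν > λ, the Laplace transform of t ↦ λ^δ t^{δν−1} E_{ν,δν}^δ(−λ t^ν) equals λ^δ / (s^ν + λ)^δ. -/
open Real MeasureTheory intervalIntegral

noncomputable def ML1 (ν z : ℝ) : ℝ := ∑' n : ℕ, z ^ n / Real.Gamma (ν * n + 1)

noncomputable def ML2 (β γ z : ℝ) : ℝ := ∑' r : ℕ, z ^ r / Real.Gamma (β * r + γ)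

noncomputable def poch (ξ : ℝ) (r : ℕ) : ℝ := ∏ i ∈ Finset.range r, (ξ + i)

noncomputable def ML3 (β γ ξ z : ℝ) : ℝ :=
  ∑' r : ℕ, poch ξ r * z ^ r / (r.factorial * Real.Gamma (β * r + γ))

open Set

/-! Expanding `E^ξ_{β,γ}` and integrating term by term against `e^{-st}` turns the Laplace
transform of `t^{γ-1} E^ξ_{β,γ}(c t^β)` into `s^{-γ} ∑ (ξ)_r q^r / r!` with `q = c / s^β`,
which is the binomial series of `(1 - q)^{-ξ}`. For `|q| < 1` the same series with `|ξ|` and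
`|q|` converges, and that absolute convergence justifies the interchange of sum and integral. -/

lemma poch_eq_ascPochhammer_eval (ξ : ℝ) (r : ℕ) :
    poch ξ r = (ascPochhammer ℝ r).eval ξ := by
  induction r with
  | zero => simp [poch]
  | succ r ih => rw [poch, Finset.prod_range_succ, ← poch, ih, ascPochhammer_succ_eval]

lemma poch_div_factorial_eq_choose (ξ : ℝ) (r : ℕ) :
    poch ξ r / r.factorial = Ring.choose (ξ + r - 1) r := by
  rw [← Ring.multichoose_eq, poch_eq_ascPochhammer_eval,
    ← Polynomial.ascPochhammer_smeval_eq_eval,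
    ← Ring.factorial_nsmul_multichoose_eq_ascPochhammer, nsmul_eq_mul]
  field_simp

lemma hasSum_poch_mul_pow_div_factorial (ξ : ℝ) {x : ℝ} (hx : |x| < 1) :
    HasSum (fun r : ℕ => poch ξ r * x ^ r / r.factorial) (1 / (1 - x) ^ ξ) := by
  have := (one_div_one_sub_rpow_hasFPowerSeriesOnBall_zero ξ).hasSum (y := x)
    (by simpa [enorm_eq_nnnorm, ← NNReal.coe_lt_coe] using hx)
  simpa [FormalMultilinearSeries.ofScalars_apply_eq, mul_div_right_comm,
    poch_div_factorial_eq_choose, mul_comm] using this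

lemma integrableOn_exp_neg_mul_mul_rpow {b p : ℝ} (hb : 0 < b) (hp : 0 < p) :
    IntegrableOn (fun t : ℝ => exp (-(b * t)) * t ^ (p - 1)) (Ioi 0) :=
  (integrableOn_rpow_mul_exp_neg_mul_rpow (s := p - 1) (by linarith) one_pos hb).congr_fun
    (fun t _ => by dsimp only; rw [rpow_one, neg_mul, mul_comm]) measurableSet_Ioi

lemma integral_exp_neg_mul_mul_rpow {b p : ℝ} (hb : 0 < b) (hp : 0 < p) :
    ∫ t in Ioi (0 : ℝ), exp (-(b * t)) * t ^ (p - 1) = Gamma p / b ^ p := by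
  simp_rw [mul_comm (exp _), integral_rpow_mul_exp_neg_mul_Ioi hp hb, one_div, inv_rpow hb.le]
  ring

lemma integral_exp_neg_mul_mul_tsum {a p : ℕ → ℝ} {b : ℝ} (hb : 0 < b) (hp : ∀ r, 0 < p r)
    (hsum : Summable fun r => |a r| * (Gamma (p r) / b ^ p r)) :
    ∫ t in Ioi (0 : ℝ), exp (-(b * t)) * ∑' r, a r * t ^ (p r - 1) =
      ∑' r, a r * (Gamma (p r) / b ^ p r) := by
  have hint (r : ℕ) : Integrable (fun t => a r * (exp (-(b * t)) * t ^ (p r - 1)))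
      (volume.restrict (Ioi 0)) :=
    (integrableOn_exp_neg_mul_mul_rpow hb (hp r)).const_mul _
  have hnorm (r : ℕ) : ∫ t in Ioi (0 : ℝ), ‖a r * (exp (-(b * t)) * t ^ (p r - 1))‖ =
      |a r| * (Gamma (p r) / b ^ p r) := by
    rw [← integral_exp_neg_mul_mul_rpow hb (hp r), ← MeasureTheory.integral_const_mul]
    refine setIntegral_congr_fun measurableSet_Ioi fun t ht => ?_
    have : 0 ≤ exp (-(b * t)) * t ^ (p r - 1) := by have := ht.out.le; positivity
    rw [norm_mul, norm_of_nonneg this, norm_eq_abs]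
  calc ∫ t in Ioi (0 : ℝ), exp (-(b * t)) * ∑' r, a r * t ^ (p r - 1)
      = ∫ t in Ioi (0 : ℝ), ∑' r, a r * (exp (-(b * t)) * t ^ (p r - 1)) := by
        simp_rw [← tsum_mul_left, mul_left_comm]
    _ = ∑' r, ∫ t in Ioi (0 : ℝ), a r * (exp (-(b * t)) * t ^ (p r - 1)) :=
        (integral_tsum_of_summable_integral_norm hint (by simpa only [hnorm] using hsum)).symm
    _ = ∑' r, a r * (Gamma (p r) / b ^ p r) := by
        simp_rw [MeasureTheory.integral_const_mul, integral_exp_neg_mul_mul_rpow hb (hp _)]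

lemma abs_poch_le (ξ : ℝ) (r : ℕ) : |poch ξ r| ≤ poch |ξ| r := by
  rw [poch, Finset.abs_prod]
  exact Finset.prod_le_prod (fun _ _ => abs_nonneg _)
    fun i _ => (abs_add_le _ _).trans_eq (by rw [Nat.abs_cast])

lemma rpow_mul_ML3_eq_tsum (β γ ξ c : ℝ) {t : ℝ} (ht : 0 < t) :
    t ^ (γ - 1) * ML3 β γ ξ (c * t ^ β) =
      ∑' r : ℕ,
        poch ξ r * c ^ r / (r.factorial * Gamma (β * r + γ)) * t ^ (β * r + γ - 1) := by
  rw [ML3, ← tsum_mul_left]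
  refine tsum_congr fun r => ?_
  rw [mul_pow, ← rpow_natCast (t ^ β), ← rpow_mul ht.le,
    show β * r + γ - 1 = β * r + (γ - 1) by ring, rpow_add ht]
  ring

theorem integral_exp_neg_mul_mul_rpow_mul_ML3 {β γ ξ c s : ℝ} (hβ : 0 < β) (hγ : 0 < γ)
    (hs : 0 < s) (hc : |c| < s ^ β) :
    ∫ t in Ioi (0 : ℝ), exp (-(s * t)) * (t ^ (γ - 1) * ML3 β γ ξ (c * t ^ β)) =
      1 / (s ^ γ * (1 - c / s ^ β) ^ ξ) := by
  have hsβ : 0 < s ^ β := rpow_pos_of_pos hs β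
  set q := c / s ^ β
  have hq : |q| < 1 := by rwa [abs_div, abs_of_pos hsβ, div_lt_one hsβ]
  have hterm (r : ℕ) : poch ξ r * c ^ r / (r.factorial * Gamma (β * r + γ)) *
      (Gamma (β * r + γ) / s ^ (β * r + γ)) = poch ξ r * q ^ r / r.factorial / s ^ γ := by
    have : Gamma (β * r + γ) ≠ 0 := (Gamma_pos_of_pos (by positivity)).ne'
    rw [rpow_add hs, rpow_mul hs.le, rpow_natCast, div_pow]
    field_simp
  have hsum : Summable fun r : ℕ => |poch ξ r * c ^ r / (r.factorial * Gamma (β * r + γ))| *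
      (Gamma (β * r + γ) / s ^ (β * r + γ)) := by
    refine ((hasSum_poch_mul_pow_div_factorial |ξ| (by rwa [abs_abs])).summable.div_const
      (s ^ γ)).of_nonneg_of_le (fun r => by positivity) fun r => ?_
    rw [← abs_of_pos (a := Gamma (β * r + γ) / s ^ (β * r + γ))
      (div_pos (Gamma_pos_of_pos (by positivity)) (by positivity)), ← abs_mul, hterm,
      abs_div, abs_of_pos (a := s ^ γ) (by positivity), abs_div, abs_mul, abs_pow, Nat.abs_cast]
    gcongr
    exact abs_poch_le ξ r
  rw [setIntegral_congr_fun measurableSet_Ioi fun t ht => by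
      rw [rpow_mul_ML3_eq_tsum β γ ξ c ht],
    integral_exp_neg_mul_mul_tsum hs (fun r => by positivity) hsum, tsum_congr hterm,
    ((hasSum_poch_mul_pow_div_factorial ξ hq).div_const _).tsum_eq, div_div, mul_comm]

theorem stmt7 (lam ν δ s : ℝ) (hlam : 0 < lam) (hν : ν ∈ Set.Ioc (0 : ℝ) 1)
    (hδ : 0 < δ) (hs : 0 < s) (hsν : lam < s ^ ν) :
    ∫ t in Set.Ioi (0 : ℝ),
        Real.exp (-(s * t)) * (lam ^ δ * t ^ (δ * ν - 1) * ML3 ν (δ * ν) δ (-(lam * t ^ ν))) =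
      lam ^ δ / (s ^ ν + lam) ^ δ := by
  have hsν_pos : 0 < s ^ ν := rpow_pos_of_pos hs ν
  have hc : |-lam| < s ^ ν := by rwa [abs_neg, abs_of_pos hlam]
  calc _ = lam ^ δ * ∫ t in Ioi (0 : ℝ),
          exp (-(s * t)) * (t ^ (δ * ν - 1) * ML3 ν (δ * ν) δ (-lam * t ^ ν)) := by
        rw [← MeasureTheory.integral_const_mul]
        congr 1 with t
        rw [neg_mul]
        ring
    _ = lam ^ δ * (1 / (s ^ (δ * ν) * (1 - -lam / s ^ ν) ^ δ)) := by
        rw [integral_exp_neg_mul_mul_rpow_mul_ML3 hν.1 (mul_pos hδ hν.1) hs hc]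
    _ = lam ^ δ / (s ^ ν + lam) ^ δ := by
        rw [neg_div, sub_neg_eq_add, mul_comm δ, rpow_mul hs.le,
          ← mul_rpow hsν_pos.le (by positivity), mul_one_add,
          mul_div_cancel₀ _ hsν_pos.ne', mul_one_div]
end

section
/- For λ > 0, ν ∈ (0,1], t > 0 and integer k ≥ 1, the fractional Poisson state probabilities p_k^ν(t) = (λ t^ν)^k E_{ν,νk+1}^{k+1}(−λ t^ν) satisfy p_k^ν(t) = λ ∫_0^t (t−w)^{ν−1} E_{ν,ν}(−λ(t−w)^ν) p_{k−1}^ν(w) dw. -/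
open Real MeasureTheory intervalIntegral

noncomputable def pfrac (lam ν : ℝ) (k : ℕ) (t : ℝ) : ℝ :=
  (lam * t ^ ν) ^ k * ML3 ν (ν * k + 1) (k + 1) (-(lam * t ^ ν))


/-! The kernels `φ_a(x) = x^(a-1)/Γ(a)` of Riemann–Liouville integration satisfy
`∫₀ᵗ φ_a(t-w) φ_b(w) dw = φ_{a+b}(t)` (the Beta integral). Both `x^(ν-1) E_{ν,ν}(-λx^ν)` and
`p_{k-1}` are absolutely convergent series in such kernels, so the convolution is computed
termwise; the Cauchy-product coefficients collapse to those of `p_k` by the Pochhammer identity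
`∑_{s ≤ m} (ξ)_s/s! = (ξ+1)_m/m!`. Absolute convergence is the ratio test, with
`Γ(x)/Γ(x+ν) = O(x^(-ν))` from the log-convexity of `Γ`. -/

open Finset

lemma poch_nonneg {ξ : ℝ} (hξ : 0 ≤ ξ) (r : ℕ) : 0 ≤ poch ξ r :=
  Finset.prod_nonneg fun _ _ => by positivity

lemma poch_succ (ξ : ℝ) (r : ℕ) : poch ξ (r + 1) = poch ξ r * (ξ + r) :=
  Finset.prod_range_succ _ r

lemma poch_succ' (ξ : ℝ) (r : ℕ) : poch ξ (r + 1) = ξ * poch (ξ + 1) r := by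
  rw [poch, Finset.prod_range_succ', mul_comm]
  push_cast
  simp only [add_zero, poch]
  exact congrArg _ (Finset.prod_congr rfl fun i _ => by ring)

lemma poch_one (r : ℕ) : poch 1 r = r.factorial := by
  induction r with
  | zero => simp [poch]
  | succ n ih => rw [poch_succ, ih, Nat.factorial_succ]; push_cast; ring

lemma sum_range_poch_div_factorial (ξ : ℝ) (m : ℕ) :
    ∑ s ∈ Finset.range (m + 1), poch ξ s / s.factorial = poch (ξ + 1) m / m.factorial := by
  induction m with
  | zero => simp [poch]
  | succ n ih =>
    rw [Finset.sum_range_succ, ih, poch_succ' ξ, poch_succ (ξ + 1), Nat.factorial_succ]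
    have : (n.factorial : ℝ) ≠ 0 := by positivity
    push_cast
    field_simp
    ring

/-- Log-convexity of `Γ` between `x + ν` and `x + ν + 1`, evaluated at `x + 1`. -/
lemma mul_Gamma_le_rpow_mul_Gamma_add {ν x : ℝ} (hν : 0 < ν) (hν1 : ν ≤ 1) (hx : 0 < x) :
    x * Gamma x ≤ (x + ν) ^ (1 - ν) * Gamma (x + ν) := by
  rw [← Gamma_add_one hx.ne']
  rcases hν1.lt_or_eq with hν1 | rfl
  · have hxν : 0 < x + ν := by positivity
    have hΓ : 0 < Gamma (x + ν) := Gamma_pos_of_pos hxν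
    have h := Gamma_mul_add_mul_le_rpow_Gamma_mul_rpow_Gamma hxν (by positivity : 0 < x + ν + 1)
      hν (sub_pos.2 hν1) (add_sub_cancel ν 1)
    rwa [show ν * (x + ν) + (1 - ν) * (x + ν + 1) = x + 1 by ring, Gamma_add_one hxν.ne',
      mul_rpow hxν.le hΓ.le, mul_left_comm, ← rpow_add hΓ, add_sub_cancel, rpow_one] at h
  · simp

lemma Gamma_div_Gamma_add_le {ν x : ℝ} (hν : 0 < ν) (hν1 : ν ≤ 1) (hx : ν ≤ x) :
    Gamma x / Gamma (x + ν) ≤ 2 * (x + ν) ^ (-ν) := by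
  have hx0 : 0 < x := hν.trans_le hx
  have hxν : 0 < x + ν := by positivity
  have hΓ : 0 < Gamma (x + ν) := Gamma_pos_of_pos hxν
  rw [div_le_iff₀ hΓ]
  have h := mul_Gamma_le_rpow_mul_Gamma_add hν hν1 hx0
  rw [show 1 - ν = -ν + 1 by ring, rpow_add_one hxν.ne'] at h
  nlinarith [Gamma_pos_of_pos hx0, rpow_pos_of_pos hxν (-ν)]

lemma ML3_term_succ {β γ ξ : ℝ} (hβ : 0 ≤ β) (hγ : 0 < γ) (z : ℝ) (n : ℕ) :
    poch ξ (n + 1) * z ^ (n + 1) / ((n + 1).factorial * Gamma (β * (n + 1 : ℕ) + γ)) =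
      poch ξ n * z ^ n / (n.factorial * Gamma (β * n + γ)) *
        ((ξ + n) * z * Gamma (β * n + γ) / ((n + 1) * Gamma (β * n + γ + β))) := by
  have hΓ : Gamma (β * n + γ) ≠ 0 := (Gamma_pos_of_pos (by positivity)).ne'
  have hΓ' : Gamma (β * n + γ + β) ≠ 0 := (Gamma_pos_of_pos (by positivity)).ne'
  rw [poch_succ, Nat.factorial_succ, show β * (n + 1 : ℕ) + γ = β * n + γ + β by push_cast; ring]
  push_cast
  field_simp
  ring

lemma summable_ML3_term {ν γ ξ : ℝ} (hν : 0 < ν) (hν1 : ν ≤ 1) (hγ : 0 < γ) (hξ : 0 ≤ ξ)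
    (z : ℝ) : Summable fun r : ℕ => poch ξ r * z ^ r / (r.factorial * Gamma (ν * r + γ)) := by
  refine summable_of_ratio_norm_eventually_le (r := 1 / 2) (by norm_num) ?_
  have hx : Filter.Tendsto (fun n : ℕ => ν * n + γ) Filter.atTop Filter.atTop :=
    Filter.tendsto_atTop_add_const_right _ _
      (tendsto_natCast_atTop_atTop.const_mul_atTop hν)
  have hbound : Filter.Tendsto (fun n : ℕ => (ξ + 1) * |z| * (2 * (ν * n + γ + ν) ^ (-ν)))
      Filter.atTop (nhds 0) := by
    simpa using ((tendsto_rpow_neg_atTop hν).comp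
      (Filter.tendsto_atTop_add_const_right _ ν hx)).const_mul 2 |>.const_mul ((ξ + 1) * |z|)
  filter_upwards [hbound.eventually_le_const (by norm_num : (0 : ℝ) < 1 / 2),
    hx.eventually_ge_atTop ν] with n hsmall hlarge
  set x := ν * n + γ
  have hΓ : 0 < Gamma x := Gamma_pos_of_pos (hν.trans_le hlarge)
  have hΓ' : 0 < Gamma (x + ν) := Gamma_pos_of_pos (by positivity)
  have hratio : (ξ + n) / (n + 1) ≤ ξ + 1 := by
    rw [div_le_iff₀ (by positivity)]; nlinarith [(n.cast_nonneg : (0 : ℝ) ≤ n)]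
  rw [ML3_term_succ hν.le hγ, norm_mul, mul_comm]
  refine mul_le_mul_of_nonneg_right ?_ (norm_nonneg _)
  calc ‖(ξ + n) * z * Gamma x / ((n + 1) * Gamma (x + ν))‖
      = (ξ + n) / (n + 1) * |z| * (Gamma x / Gamma (x + ν)) := by
        rw [Real.norm_eq_abs, abs_div, abs_mul, abs_mul, abs_mul, abs_of_nonneg (by positivity),
          abs_of_pos hΓ, abs_of_pos hΓ', abs_of_pos (by positivity : (0 : ℝ) < n + 1)]
        field_simp
    _ ≤ (ξ + 1) * |z| * (2 * (x + ν) ^ (-ν)) := by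
        gcongr
        exact Gamma_div_Gamma_add_le hν hν1 hlarge
    _ ≤ 1 / 2 := hsmall

lemma integral_rpow_mul_sub_rpow {a b t : ℝ} (ha : 0 < a) (hb : 0 < b) (ht : 0 < t) :
    ∫ w in (0 : ℝ)..t, w ^ (b - 1) * (t - w) ^ (a - 1) =
      Gamma a * Gamma b / Gamma (a + b) * t ^ (a + b - 1) := by
  have hcast : ((∫ w in (0 : ℝ)..t, w ^ (b - 1) * (t - w) ^ (a - 1) : ℝ) : ℂ) =
      ∫ w in (0 : ℝ)..t, (w : ℂ) ^ ((b : ℂ) - 1) * ((t : ℂ) - w) ^ ((a : ℂ) - 1) := by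
    rw [← intervalIntegral.integral_ofReal]
    refine intervalIntegral.integral_congr fun w hw => ?_
    rw [Set.uIcc_of_le ht.le] at hw
    simp only [Complex.ofReal_mul, Complex.ofReal_cpow hw.1,
      Complex.ofReal_cpow (sub_nonneg.2 hw.2)]
    push_cast
    rfl
  have hB : Complex.betaIntegral b a = Gamma a * Gamma b / Gamma (a + b) := by
    have hΓ : (Gamma (a + b) : ℂ) ≠ 0 :=
      Complex.ofReal_ne_zero.2 (Gamma_pos_of_pos (by positivity)).ne'
    have h := Complex.Gamma_mul_Gamma_eq_betaIntegral (s := b) (t := a) (by simpa) (by simpa)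
    rw [← Complex.ofReal_add, add_comm b, Complex.Gamma_ofReal, Complex.Gamma_ofReal,
      Complex.Gamma_ofReal] at h
    rw [eq_div_iff hΓ]
    linear_combination -h
  apply Complex.ofReal_injective
  rw [hcast, Complex.betaIntegral_scaled _ _ ht, hB]
  push_cast [Complex.ofReal_cpow ht.le]
  ring_nf

noncomputable def rlKernel (a x : ℝ) : ℝ := x ^ (a - 1) / Gamma a

lemma rlKernel_nonneg {a x : ℝ} (ha : 0 < a) (hx : 0 ≤ x) : 0 ≤ rlKernel a x :=
  div_nonneg (rpow_nonneg hx _) (Gamma_pos_of_pos ha).le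

lemma rlKernel_pos {a x : ℝ} (ha : 0 < a) (hx : 0 < x) : 0 < rlKernel a x :=
  div_pos (rpow_pos_of_pos hx _) (Gamma_pos_of_pos ha)

lemma integral_rlKernel_mul_rlKernel {a b t : ℝ} (ha : 0 < a) (hb : 0 < b) (ht : 0 < t) :
    ∫ w in (0 : ℝ)..t, rlKernel a (t - w) * rlKernel b w = rlKernel (a + b) t := by
  have hΓa := (Gamma_pos_of_pos ha).ne'
  have hΓb := (Gamma_pos_of_pos hb).ne'
  simp only [rlKernel, div_mul_div_comm, intervalIntegral.integral_div, mul_comm ((_ - _) ^ _),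
    integral_rpow_mul_sub_rpow ha hb ht]
  field_simp

lemma intervalIntegrable_rlKernel_mul_rlKernel {a b t : ℝ} (ha : 0 < a) (hb : 0 < b)
    (ht : 0 < t) : IntervalIntegrable (fun w => rlKernel a (t - w) * rlKernel b w) volume 0 t :=
  -- the integral of a non-integrable function is `0`
  intervalIntegrable_of_integral_ne_zero <| by
    rw [integral_rlKernel_mul_rlKernel ha hb ht]
    exact (rlKernel_pos (add_pos ha hb) ht).ne'

lemma integrableOn_Ioo_rlKernel_mul_rlKernel {a b t : ℝ} (ha : 0 < a) (hb : 0 < b)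
    (ht : 0 < t) : IntegrableOn (fun w => rlKernel a (t - w) * rlKernel b w) (Set.Ioo 0 t) :=
  (intervalIntegrable_rlKernel_mul_rlKernel ha hb ht).1.mono_set Set.Ioo_subset_Ioc_self

lemma integral_Ioo_rlKernel_mul_rlKernel {a b t : ℝ} (ha : 0 < a) (hb : 0 < b) (ht : 0 < t) :
    ∫ w in Set.Ioo 0 t, rlKernel a (t - w) * rlKernel b w = rlKernel (a + b) t := by
  rw [← integral_Ioc_eq_integral_Ioo, ← intervalIntegral.integral_of_le ht.le,
    integral_rlKernel_mul_rlKernel ha hb ht]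

lemma norm_mul_rlKernel {a x : ℝ} (ha : 0 < a) (hx : 0 ≤ x) (c : ℝ) :
    ‖c * rlKernel a x‖ = |c| * rlKernel a x := by
  rw [norm_mul, Real.norm_eq_abs, Real.norm_of_nonneg (rlKernel_nonneg ha hx)]

lemma pow_mul_rlKernel {ν γ x : ℝ} (hx : 0 < x) (c : ℝ) (r : ℕ) :
    c ^ r * rlKernel (ν * r + γ) x = x ^ (γ - 1) * ((c * x ^ ν) ^ r / Gamma (ν * r + γ)) := by
  rw [rlKernel, mul_pow, ← rpow_natCast (x ^ ν), ← rpow_mul hx.le,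
    show ν * r + γ - 1 = (γ - 1) + ν * r by ring, rpow_add hx]
  ring

lemma rpow_mul_ML2 {ν γ x : ℝ} (hx : 0 < x) (c : ℝ) :
    x ^ (γ - 1) * ML2 ν γ (c * x ^ ν) = ∑' r : ℕ, c ^ r * rlKernel (ν * r + γ) x := by
  rw [ML2, ← tsum_mul_left]
  exact tsum_congr fun r => (pow_mul_rlKernel hx c r).symm

lemma rpow_mul_ML3 {ν γ x : ℝ} (hx : 0 < x) (ξ c : ℝ) :
    x ^ (γ - 1) * ML3 ν γ ξ (c * x ^ ν) =
      ∑' r : ℕ, poch ξ r / r.factorial * c ^ r * rlKernel (ν * r + γ) x := by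
  rw [ML3, ← tsum_mul_left]
  refine tsum_congr fun r => ?_
  rw [mul_assoc, pow_mul_rlKernel hx]
  ring

lemma summable_poch_mul_rlKernel {ν γ ξ x : ℝ} (hν : 0 < ν) (hν1 : ν ≤ 1) (hγ : 0 < γ)
    (hξ : 0 ≤ ξ) (hx : 0 < x) (c : ℝ) :
    Summable fun r : ℕ => poch ξ r / r.factorial * c ^ r * rlKernel (ν * r + γ) x := by
  refine ((summable_ML3_term hν hν1 hγ hξ (c * x ^ ν)).mul_left (x ^ (γ - 1))).congr fun r => ?_
  rw [mul_assoc, pow_mul_rlKernel hx]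
  ring

lemma summable_pow_mul_rlKernel {ν γ x : ℝ} (hν : 0 < ν) (hν1 : ν ≤ 1) (hγ : 0 < γ)
    (hx : 0 < x) (c : ℝ) : Summable fun r : ℕ => c ^ r * rlKernel (ν * r + γ) x := by
  simpa [poch_one, div_self, Nat.factorial_ne_zero] using
    summable_poch_mul_rlKernel hν hν1 hγ zero_le_one hx c

lemma sum_antidiagonal_pow_mul_poch (c ξ : ℝ) (m : ℕ) :
    ∑ p ∈ antidiagonal m, c ^ p.1 * (poch ξ p.2 / p.2.factorial * c ^ p.2) =
      poch (ξ + 1) m / m.factorial * c ^ m := by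
  rw [← sum_range_poch_div_factorial, Finset.sum_mul,
    ← Finset.Nat.sum_antidiagonal_swap, Finset.Nat.sum_antidiagonal_eq_sum_range_succ_mk]
  refine Finset.sum_congr rfl fun k hk => ?_
  rw [Prod.swap_prod_mk, mul_left_comm, ← pow_add,
    Nat.sub_add_cancel (Nat.lt_succ_iff.1 (Finset.mem_range.1 hk))]

lemma sum_antidiagonal_mul_add (g : ℕ × ℕ → ℝ) (h : ℕ → ℝ) (n : ℕ) :
    ∑ p ∈ antidiagonal n, g p * h (p.1 + p.2) = (∑ p ∈ antidiagonal n, g p) * h n := by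
  rw [Finset.sum_mul]
  exact Finset.sum_congr rfl fun p hp => by rw [mem_antidiagonal.1 hp]

lemma summable_of_summable_sum_antidiagonal {f : ℕ × ℕ → ℝ} (hf : ∀ p, 0 ≤ f p)
    (h : Summable fun n => ∑ p ∈ antidiagonal n, f p) : Summable f := by
  rw [← HasAntidiagonal.sigmaAntidiagonalEquivProd.summable_iff]
  refine (summable_sigma_of_nonneg fun _ => hf _).2 ⟨fun _ => (hasSum_fintype _).summable, ?_⟩
  simpa [tsum_fintype, Finset.sum_attach] using h

lemma tsum_eq_tsum_sum_antidiagonal {f : ℕ × ℕ → ℝ} (hf : Summable f) :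
    ∑' p, f p = ∑' n, ∑ p ∈ antidiagonal n, f p := by
  have h : Summable fun c => f (HasAntidiagonal.sigmaAntidiagonalEquivProd c) :=
    HasAntidiagonal.sigmaAntidiagonalEquivProd.summable_iff.2 hf
  rw [← HasAntidiagonal.sigmaAntidiagonalEquivProd.tsum_eq,
    h.tsum_sigma' fun _ => (hasSum_fintype _).summable]
  simp [tsum_fintype, Finset.sum_attach]

theorem integral_conv_eq_tsum_rlKernel {ν α β t : ℝ} (hν : 0 ≤ ν) (hα : 0 < α) (hβ : 0 < β)
    (ht : 0 < t) {F G : ℝ → ℝ} {a b : ℕ → ℝ}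
    (hF : ∀ x, 0 < x → F x = ∑' r, a r * rlKernel (ν * r + α) x)
    (hG : ∀ x, 0 < x → G x = ∑' s, b s * rlKernel (ν * s + β) x)
    (ha : ∀ x, 0 < x → Summable fun r => |a r| * rlKernel (ν * r + α) x)
    (hb : ∀ x, 0 < x → Summable fun s => |b s| * rlKernel (ν * s + β) x)
    (hab : Summable fun m : ℕ =>
      (∑ p ∈ antidiagonal m, |a p.1| * |b p.2|) * rlKernel (ν * m + (α + β)) t) :
    ∫ w in (0 : ℝ)..t, F (t - w) * G w =
      ∑' m : ℕ, (∑ p ∈ antidiagonal m, a p.1 * b p.2) * rlKernel (ν * m + (α + β)) t := by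
  set k : ℕ × ℕ → ℝ → ℝ := fun p w => rlKernel (ν * p.1 + α) (t - w) * rlKernel (ν * p.2 + β) w
  set φ : ℕ → ℝ := fun m => rlKernel (ν * m + (α + β)) t
  have hk_integral : ∀ p, ∫ w in Set.Ioo 0 t, k p w = φ (p.1 + p.2) := fun p => by
    rw [integral_Ioo_rlKernel_mul_rlKernel (by positivity) (by positivity) ht]
    congr 1
    push_cast
    ring
  have hexpand : ∀ w ∈ Set.Ioo 0 t, F (t - w) * G w = ∑' p : ℕ × ℕ, a p.1 * b p.2 * k p w := by
    intro w ⟨hw, hwt⟩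
    have htw : 0 < t - w := sub_pos.2 hwt
    rw [hF _ htw, hG _ hw, tsum_mul_tsum_of_summable_norm
      ((ha _ htw).congr fun r => (norm_mul_rlKernel (by positivity) htw.le _).symm)
      ((hb _ hw).congr fun s => (norm_mul_rlKernel (by positivity) hw.le _).symm)]
    exact tsum_congr fun p => by ring
  have hintegral_norm : ∀ p : ℕ × ℕ,
      ∫ w in Set.Ioo 0 t, ‖a p.1 * b p.2 * k p w‖ = |a p.1| * |b p.2| * φ (p.1 + p.2) := by
    intro p
    rw [← hk_integral, ← MeasureTheory.integral_const_mul]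
    refine setIntegral_congr_fun measurableSet_Ioo fun w ⟨hw, hwt⟩ => ?_
    rw [norm_mul, norm_mul, Real.norm_eq_abs, Real.norm_eq_abs, Real.norm_of_nonneg
      (mul_nonneg (rlKernel_nonneg (by positivity) (by linarith))
        (rlKernel_nonneg (by positivity) hw.le))]
  have hsummable : Summable fun p : ℕ × ℕ => |a p.1| * |b p.2| * φ (p.1 + p.2) :=
    summable_of_summable_sum_antidiagonal
      (fun p => mul_nonneg (by positivity) (rlKernel_nonneg (by positivity) ht.le))
      (by simpa only [sum_antidiagonal_mul_add] using hab)
  rw [intervalIntegral.integral_of_le ht.le, integral_Ioc_eq_integral_Ioo,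
    setIntegral_congr_fun measurableSet_Ioo hexpand,
    ← integral_tsum_of_summable_integral_norm
      (fun p => (integrableOn_Ioo_rlKernel_mul_rlKernel (by positivity) (by positivity)
        ht).const_mul _)
      (hsummable.congr fun p => (hintegral_norm p).symm)]
  simp_rw [MeasureTheory.integral_const_mul]
  rw [tsum_congr fun p => congrArg (a p.1 * b p.2 * ·) (hk_integral p),
    tsum_eq_tsum_sum_antidiagonal (hsummable.of_norm_bounded fun p => ?_)]
  · exact tsum_congr fun m => sum_antidiagonal_mul_add _ φ m
  · rw [norm_mul, norm_mul, Real.norm_eq_abs, Real.norm_eq_abs,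
      Real.norm_of_nonneg (rlKernel_nonneg (by positivity) ht.le)]

noncomputable def pfracCoeff (lam : ℝ) (k s : ℕ) : ℝ :=
  lam ^ k * (poch (k + 1) s / s.factorial * (-lam) ^ s)

lemma pfrac_eq_tsum_rlKernel (lam ν : ℝ) (k : ℕ) {t : ℝ} (ht : 0 < t) :
    pfrac lam ν k t = ∑' s : ℕ, pfracCoeff lam k s * rlKernel (ν * s + (ν * k + 1)) t := by
  have h := rpow_mul_ML3 (ν := ν) (γ := ν * k + 1) ht (k + 1) (-lam)
  rw [add_sub_cancel_right, neg_mul] at h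
  rw [pfrac, mul_pow, ← rpow_natCast (t ^ ν) k, ← rpow_mul ht.le, mul_assoc, h, ← tsum_mul_left]
  exact tsum_congr fun s => by rw [pfracCoeff]; ring

lemma mul_sum_antidiagonal_pow_mul_pfracCoeff (lam : ℝ) (k m : ℕ) :
    lam * ∑ p ∈ antidiagonal m, (-lam) ^ p.1 * pfracCoeff lam k p.2 = pfracCoeff lam (k + 1) m := by
  simp_rw [pfracCoeff, mul_left_comm ((-lam) ^ _) (lam ^ k), ← Finset.mul_sum,
    sum_antidiagonal_pow_mul_poch]
  push_cast
  ring

lemma abs_pfracCoeff (lam : ℝ) (k s : ℕ) :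
    |pfracCoeff lam k s| = |lam| ^ k * (poch (k + 1) s / s.factorial * |lam| ^ s) := by
  rw [pfracCoeff, abs_mul, abs_mul, abs_div, abs_pow, abs_pow, abs_neg,
    abs_of_nonneg (poch_nonneg (by positivity) _), Nat.abs_cast]

lemma summable_abs_pfracCoeff_mul_rlKernel {ν x : ℝ} (hν : 0 < ν) (hν1 : ν ≤ 1) (hx : 0 < x)
    (lam : ℝ) (k : ℕ) :
    Summable fun s : ℕ => |pfracCoeff lam k s| * rlKernel (ν * s + (ν * k + 1)) x := by
  refine ((summable_poch_mul_rlKernel (γ := ν * k + 1) (ξ := k + 1) hν hν1 (by positivity)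
    (by positivity) hx |lam|).mul_left (|lam| ^ k)).congr fun s => ?_
  rw [abs_pfracCoeff]
  ring

lemma summable_sum_antidiagonal_abs_pfracCoeff {ν t : ℝ} (hν : 0 < ν) (hν1 : ν ≤ 1)
    (ht : 0 < t) (lam : ℝ) (k : ℕ) :
    Summable fun m : ℕ => (∑ p ∈ antidiagonal m, |(-lam) ^ p.1| * |pfracCoeff lam k p.2|) *
      rlKernel (ν * m + (ν + (ν * k + 1))) t := by
  refine ((summable_poch_mul_rlKernel (γ := ν + (ν * k + 1)) (ξ := k + 1 + 1) hν hν1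
    (by positivity) (by positivity) ht |lam|).mul_left (|lam| ^ k)).congr fun m => ?_
  simp_rw [abs_pfracCoeff, abs_pow, abs_neg, mul_left_comm (|lam| ^ _) (|lam| ^ k),
    ← Finset.mul_sum, sum_antidiagonal_pow_mul_poch]
  ring

theorem stmt10_general (lam ν t : ℝ) (k : ℕ) (hk : 1 ≤ k)
    (hν : ν ∈ Set.Ioc (0 : ℝ) 1) (ht : 0 < t) :
    pfrac lam ν k t =
      lam * ∫ w in (0 : ℝ)..t,
        (t - w) ^ (ν - 1) * ML2 ν ν (-(lam * (t - w) ^ ν)) * pfrac lam ν (k - 1) w := by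
  obtain ⟨hν0, hν1⟩ := hν
  obtain ⟨K, rfl⟩ := Nat.exists_eq_add_of_le' hk
  rw [Nat.add_sub_cancel, integral_conv_eq_tsum_rlKernel hν0.le hν0 (by positivity) ht
      (F := fun x => x ^ (ν - 1) * ML2 ν ν (-(lam * x ^ ν))) (G := pfrac lam ν K)
      (a := fun r => (-lam) ^ r) (b := pfracCoeff lam K)
      (fun x hx => by rw [← neg_mul, rpow_mul_ML2 hx])
      (fun x hx => pfrac_eq_tsum_rlKernel lam ν K hx)
      (fun x hx => by
        simpa only [abs_pow, abs_neg] using summable_pow_mul_rlKernel hν0 hν1 hν0 hx |lam|)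
      (fun x hx => summable_abs_pfracCoeff_mul_rlKernel hν0 hν1 hx lam K)
      (summable_sum_antidiagonal_abs_pfracCoeff hν0 hν1 ht lam K),
    pfrac_eq_tsum_rlKernel lam ν _ ht, ← tsum_mul_left]
  refine tsum_congr fun m => ?_
  rw [← mul_assoc, mul_sum_antidiagonal_pow_mul_pfracCoeff]
  congr 2
  push_cast
  ring

theorem stmt10 (lam ν t : ℝ) (k : ℕ) (hk : 1 ≤ k) (hlam : 0 < lam)
    (hν : ν ∈ Set.Ioc (0 : ℝ) 1) (ht : 0 < t) :
    pfrac lam ν k t =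
      lam * ∫ w in (0 : ℝ)..t,
        (t - w) ^ (ν - 1) * ML2 ν ν (-(lam * (t - w) ^ ν)) * pfrac lam ν (k - 1) w :=
  stmt10_general lam ν t k hk hν ht
end
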